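/- The Gauss linking number is invariant under ambient isotopy: if H : ℝ³ × [0,1] → ℝ³ is a smooth isotopy with H(·,0) = id, and α, β are disjoint smooth loops, then lnk(H(α,1), H(β,1)) = lnk(α, β). -/

import Mathlib

/- STATEMENT 6: The Gauss linking number is invariant under ambient isotopy:
if H : ℝ³ × [0,1] → ℝ³ is a smooth isotopy with H(·,0) = id (each H(·,t) a
diffeomorphism of ℝ³), and α, β are disjoint smooth loops, then
lnk(H(α,1), H(β,1)) = lnk(α,β). -/

open Real MeasureTheory

abbrev R3 := Fin 3 → ℝ

noncomputable def enorm3 (v : R3) : ℝ := Real.sqrt (dotProduct v v)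

def IsSmoothLoop (α : ℝ → R3) : Prop := ContDiff ℝ (⊤ : ℕ∞) α ∧ Function.Periodic α 1

/-- The Gauss linking number of two loops, via the Gauss double integral. -/
noncomputable def gaussLnk (α β : ℝ → R3) : ℝ :=
  (1 / (4 * π)) * ∫ s in (0:ℝ)..1, ∫ t in (0:ℝ)..1,
    dotProduct (crossProduct (deriv α s) (deriv β t)) (β t - α s) /
      (enorm3 (β t - α s)) ^ 3

noncomputable section
namespace GLK

def d3 (u v w : R3) : ℝ := dotProduct (crossProduct u v) w
def dp (v w : R3) : ℝ := dotProduct v w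
def nrm (v : R3) : ℝ := Real.sqrt (dp v v)

lemma d3_expand (u v w : R3) : d3 u v w =
    (u 1 * v 2 - u 2 * v 1) * w 0 + (u 2 * v 0 - u 0 * v 2) * w 1
      + (u 0 * v 1 - u 1 * v 0) * w 2 := by
  simp [d3, cross_apply, dotProduct, Fin.sum_univ_three]

lemma dp_expand (v w : R3) : dp v w = v 0 * w 0 + v 1 * w 1 + v 2 * w 2 := by
  simp [dp, dotProduct, Fin.sum_univ_three]

lemma d3_swap (u v w : R3) : d3 u v w = - d3 v u w := by
  simp only [d3_expand]; ring

lemma cramer_identity (w a b c : R3) :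
    dp w w * d3 a b c =
      dp w c * d3 a b w + dp w a * d3 b c w + dp w b * d3 c a w := by
  simp only [d3_expand, dp_expand]; ring

lemma dp_self_nonneg (v : R3) : 0 ≤ dp v v := by
  rw [dp, dotProduct]
  exact Finset.sum_nonneg fun i _ => mul_self_nonneg _

lemma dp_self_pos {v : R3} (hv : v ≠ 0) : 0 < dp v v := by
  rcases (dp_self_nonneg v).lt_or_eq with h | h
  · exact h
  · exfalso
    apply hv
    funext i
    have h0 : ∑ j : Fin 3, v j * v j = 0 := by
      rw [dp, dotProduct] at h; exact h.symm
    have := (Finset.sum_eq_zero_iff_of_nonneg (fun j _ => mul_self_nonneg (v j))).1 h0 i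
      (Finset.mem_univ i)
    have := mul_self_eq_zero.1 this
    simpa using this

lemma nrm_pos {v : R3} (hv : v ≠ 0) : 0 < nrm v := Real.sqrt_pos.2 (dp_self_pos hv)

lemma nrm_sq (v : R3) : nrm v ^ 2 = dp v v := Real.sq_sqrt (dp_self_nonneg v)

lemma hasDerivAt_d3 {f g h : ℝ → R3} {f' g' h' : R3} {τ : ℝ}
    (hf : HasDerivAt f f' τ) (hg : HasDerivAt g g' τ) (hh : HasDerivAt h h' τ) :
    HasDerivAt (fun τ => d3 (f τ) (g τ) (h τ))
      (d3 f' (g τ) (h τ) + d3 (f τ) g' (h τ) + d3 (f τ) (g τ) h') τ := by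
  have Hf := hasDerivAt_pi.1 hf
  have Hg := hasDerivAt_pi.1 hg
  have Hh := hasDerivAt_pi.1 hh
  simp only [d3_expand]
  have := ((((Hf 1).mul (Hg 2)).sub ((Hf 2).mul (Hg 1))).mul (Hh 0)).add
    (((((Hf 2).mul (Hg 0)).sub ((Hf 0).mul (Hg 2))).mul (Hh 1)).add
      ((((Hf 0).mul (Hg 1)).sub ((Hf 1).mul (Hg 0))).mul (Hh 2)))
  convert this using 1
  · rfl
  · rfl
  · funext σ; simp only [Pi.mul_apply, Pi.sub_apply, Pi.add_apply]; ring
  · simp only [Pi.mul_apply, Pi.sub_apply]; ring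

lemma hasDerivAt_dp {f g : ℝ → R3} {f' g' : R3} {τ : ℝ}
    (hf : HasDerivAt f f' τ) (hg : HasDerivAt g g' τ) :
    HasDerivAt (fun τ => dp (f τ) (g τ)) (dp f' (g τ) + dp (f τ) g') τ := by
  have Hf := hasDerivAt_pi.1 hf
  have Hg := hasDerivAt_pi.1 hg
  simp only [dp_expand]
  have := (((Hf 0).mul (Hg 0)).add ((Hf 1).mul (Hg 1))).add ((Hf 2).mul (Hg 2))
  refine this.congr_deriv ?_
  ring

lemma hasDerivAt_nrm_cube {x : ℝ → R3} {x' : R3} {τ : ℝ}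
    (hx : HasDerivAt x x' τ) (h0 : x τ ≠ 0) :
    HasDerivAt (fun τ => nrm (x τ) ^ 3) (3 * nrm (x τ) * dp (x τ) x') τ := by
  have hq : HasDerivAt (fun τ => dp (x τ) (x τ)) (dp x' (x τ) + dp (x τ) x') τ :=
    hasDerivAt_dp hx hx
  have hqpos : 0 < dp (x τ) (x τ) := dp_self_pos h0
  have hs := (hq.sqrt (ne_of_gt hqpos)).pow 3
  refine hs.congr_deriv (Eq.symm ?_)
  have hcomm : dp x' (x τ) = dp (x τ) x' := by simp only [dp_expand]; ring
  have hsq : Real.sqrt (dp (x τ) (x τ)) ^ 2 = dp (x τ) (x τ) := Real.sq_sqrt hqpos.le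
  have hsne : Real.sqrt (dp (x τ) (x τ)) ≠ 0 := ne_of_gt (Real.sqrt_pos.2 hqpos)
  rw [nrm, hcomm]
  field_simp
  ring

variable (X : ℝ × ℝ × ℝ → R3)

def P (v z : ℝ × ℝ × ℝ) : R3 := fderiv ℝ X z v
def PP (c v z : ℝ × ℝ × ℝ) : R3 := fderiv ℝ (fderiv ℝ X) z c v
def om (v w z : ℝ × ℝ × ℝ) : ℝ := d3 (P X v z) (P X w z) (X z) / nrm (X z) ^ 3
def Dom (v w c z : ℝ × ℝ × ℝ) : ℝ :=
  (d3 (PP X c v z) (P X w z) (X z) + d3 (P X v z) (PP X c w z) (X z)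
    + d3 (P X v z) (P X w z) (P X c z)) / nrm (X z) ^ 3
  - 3 * dp (X z) (P X c z) * d3 (P X v z) (P X w z) (X z) / nrm (X z) ^ 5

lemma hasDerivAt_om (hX : ContDiff ℝ (⊤ : ℕ∞) X) {g : ℝ → ℝ × ℝ × ℝ} {g' : ℝ × ℝ × ℝ} {τ : ℝ}
    (hg : HasDerivAt g g' τ) (h0 : X (g τ) ≠ 0) (v w : ℝ × ℝ × ℝ) :
    HasDerivAt (fun τ => om X v w (g τ)) (Dom X v w g' (g τ)) τ := by
  have hXdiff : Differentiable ℝ X := hX.differentiable (by simp)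
  have hxg : HasDerivAt (fun τ => X (g τ)) (P X g' (g τ)) τ :=
    (hXdiff (g τ)).hasFDerivAt.comp_hasDerivAt τ hg
  have hF : ContDiff ℝ (⊤ : ℕ∞) (fderiv ℝ X) := hX.fderiv_right (by simp)
  have hFg : HasDerivAt (fun τ => fderiv ℝ X (g τ)) (fderiv ℝ (fderiv ℝ X) (g τ) g') τ :=
    ((hF.differentiable (by simp)) (g τ)).hasFDerivAt.comp_hasDerivAt τ hg
  have hP : ∀ v : ℝ × ℝ × ℝ, HasDerivAt (fun τ => P X v (g τ)) (PP X g' v (g τ)) τ := by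
    intro v
    have := hFg.clm_apply (hasDerivAt_const τ v)
    simpa [P, PP] using this
  have hnum := hasDerivAt_d3 (hP v) (hP w) hxg
  have hden := hasDerivAt_nrm_cube hxg h0
  have hdne : nrm (X (g τ)) ^ 3 ≠ 0 := ne_of_gt (pow_pos (nrm_pos h0) 3)
  have := hnum.div hden hdne
  refine this.congr_deriv (Eq.symm ?_)
  rw [Dom]
  have hrne : nrm (X (g τ)) ≠ 0 := ne_of_gt (nrm_pos h0)
  field_simp


lemma d3_cyc (u v w : R3) : d3 u v w = d3 v w u := by
  simp only [d3_expand]; ring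

lemma PP_symm (hX : ContDiff ℝ (⊤ : ℕ∞) X) (z a b : ℝ × ℝ × ℝ) : PP X a b z = PP X b a z := by
  have hXdiff : Differentiable ℝ X := hX.differentiable (by simp)
  have hF : ContDiff ℝ (⊤ : ℕ∞) (fderiv ℝ X) := hX.fderiv_right (by simp)
  exact second_derivative_symmetric (fun y => (hXdiff y).hasFDerivAt)
    ((hF.differentiable (by simp) z).hasFDerivAt) a b

lemma Dom_cyclic (hX : ContDiff ℝ (⊤ : ℕ∞) X) {z : ℝ × ℝ × ℝ} (h0 : X z ≠ 0) (a b c : ℝ × ℝ × ℝ) :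
    Dom X a b c z + Dom X b c a z + Dom X c a b z = 0 := by
  have e1 := PP_symm X hX z c a
  have e2 := PP_symm X hX z c b
  have e3 := PP_symm X hX z a b
  simp only [Dom]
  rw [e1, e2, e3]
  have hrne : nrm (X z) ≠ 0 := ne_of_gt (nrm_pos h0)
  have h2 : nrm (X z) ^ 2 = dp (X z) (X z) := nrm_sq (X z)
  set r := nrm (X z) with hr
  set w := X z with hw
  set ma := P X a z ; set mb := P X b z ; set mc := P X c z
  set hca := PP X a c z ; set hcb := PP X b c z ; set hab := PP X b a z
  field_simp
  simp only [d3_expand, dp_expand] at h2 ⊢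
  linear_combination (3 * ((ma 1 * mb 2 - ma 2 * mb 1) * mc 0
    + (ma 2 * mb 0 - ma 0 * mb 2) * mc 1 + (ma 0 * mb 1 - ma 1 * mb 0) * mc 2)) * h2


lemma cont_d3 {A : Type*} [TopologicalSpace A] {f g h : A → R3}
    (hf : Continuous f) (hg : Continuous g) (hh : Continuous h) :
    Continuous fun z => d3 (f z) (g z) (h z) := by
  simp only [d3_expand]
  have hfi : ∀ i, Continuous fun z => f z i := fun i => (continuous_apply i).comp hf
  have hgi : ∀ i, Continuous fun z => g z i := fun i => (continuous_apply i).comp hg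
  have hhi : ∀ i, Continuous fun z => h z i := fun i => (continuous_apply i).comp hh
  exact (((((hfi 1).mul (hgi 2)).sub ((hfi 2).mul (hgi 1))).mul (hhi 0)).add
    ((((hfi 2).mul (hgi 0)).sub ((hfi 0).mul (hgi 2))).mul (hhi 1))).add
      ((((hfi 0).mul (hgi 1)).sub ((hfi 1).mul (hgi 0))).mul (hhi 2))

lemma cont_dp {A : Type*} [TopologicalSpace A] {f g : A → R3}
    (hf : Continuous f) (hg : Continuous g) :
    Continuous fun z => dp (f z) (g z) := by
  simp only [dp_expand]
  have hfi : ∀ i, Continuous fun z => f z i := fun i => (continuous_apply i).comp hf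
  have hgi : ∀ i, Continuous fun z => g z i := fun i => (continuous_apply i).comp hg
  exact (((hfi 0).mul (hgi 0)).add ((hfi 1).mul (hgi 1))).add ((hfi 2).mul (hgi 2))

lemma cont_nrm {A : Type*} [TopologicalSpace A] {f : A → R3} (hf : Continuous f) :
    Continuous fun z => nrm (f z) :=
  Real.continuous_sqrt.comp (cont_dp hf hf)

lemma contP (hX : ContDiff ℝ (⊤ : ℕ∞) X) (v : ℝ × ℝ × ℝ) : Continuous (P X v) :=
  (hX.continuous_fderiv (by simp)).clm_apply continuous_const

lemma contPP (hX : ContDiff ℝ (⊤ : ℕ∞) X) (c v : ℝ × ℝ × ℝ) : Continuous (PP X c v) :=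
  ((((hX.fderiv_right (m := (⊤ : ℕ∞)) (by simp)).continuous_fderiv (by simp)).clm_apply
    continuous_const).clm_apply continuous_const)

lemma continuousOn_om (hX : ContDiff ℝ (⊤ : ℕ∞) X) (v w : ℝ × ℝ × ℝ) :
    ContinuousOn (om X v w) {z | X z ≠ 0} := by
  have hc : Continuous X := hX.continuous
  apply ContinuousOn.div
  · exact (cont_d3 (contP X hX v) (contP X hX w) hc).continuousOn
  · exact ((cont_nrm hc).pow 3).continuousOn
  · exact fun z hz => pow_ne_zero _ (ne_of_gt (nrm_pos hz))

lemma continuousOn_Dom (hX : ContDiff ℝ (⊤ : ℕ∞) X) (v w c : ℝ × ℝ × ℝ) :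
    ContinuousOn (Dom X v w c) {z | X z ≠ 0} := by
  have hc : Continuous X := hX.continuous
  apply ContinuousOn.sub
  · apply ContinuousOn.div
    · exact (((cont_d3 (contPP X hX c v) (contP X hX w) hc).add
        (cont_d3 (contP X hX v) (contPP X hX c w) hc)).add
        (cont_d3 (contP X hX v) (contP X hX w) (contP X hX c))).continuousOn
    · exact ((cont_nrm hc).pow 3).continuousOn
    · exact fun z hz => pow_ne_zero _ (ne_of_gt (nrm_pos hz))
  · apply ContinuousOn.div
    · exact ((continuous_const.mul (cont_dp hc (contP X hX c))).mul
        (cont_d3 (contP X hX v) (contP X hX w) hc)).continuousOn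
    · exact ((cont_nrm hc).pow 5).continuousOn
    · exact fun z hz => pow_ne_zero _ (ne_of_gt (nrm_pos hz))

lemma fderiv_per {F : Type*} [NormedAddCommGroup F] [NormedSpace ℝ F]
    {f : ℝ × ℝ × ℝ → F} (hf : Differentiable ℝ f) {c : ℝ × ℝ × ℝ}
    (hper : ∀ z, f (z + c) = f z) (z : ℝ × ℝ × ℝ) :
    fderiv ℝ f (z + c) = fderiv ℝ f z := by
  have h1 : HasFDerivAt (fun y : ℝ × ℝ × ℝ => y + c)
      (ContinuousLinearMap.id ℝ (ℝ × ℝ × ℝ)) z := by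
    simpa using (hasFDerivAt_id z).add_const c
  have h2 := (hf (z + c)).hasFDerivAt.comp z h1
  have h3 : (f ∘ fun y : ℝ × ℝ × ℝ => y + c) = f := funext fun y => hper y
  rw [h3, ContinuousLinearMap.comp_id] at h2
  exact ((hf z).hasFDerivAt.unique h2).symm

lemma om_per (hX : ContDiff ℝ (⊤ : ℕ∞) X) {c : ℝ × ℝ × ℝ} (hper : ∀ z, X (z + c) = X z)
    (v w z : ℝ × ℝ × ℝ) : om X v w (z + c) = om X v w z := by
  unfold om P
  rw [fderiv_per (hX.differentiable (by simp)) hper, hper]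


/-! ### Integration machinery -/

def E1 : ℝ × ℝ × ℝ := (1, 0, 0)
def E2 : ℝ × ℝ × ℝ := (0, 1, 0)
def E3 : ℝ × ℝ × ℝ := (0, 0, 1)

abbrev mu01 : Measure ℝ := volume.restrict (Set.Ioc (0:ℝ) 1)

lemma mu01_prod : mu01.prod mu01 = volume.restrict (Set.Ioc (0:ℝ) 1 ×ˢ Set.Ioc (0:ℝ) 1) := by
  rw [Measure.prod_restrict, ← Measure.volume_eq_prod]

lemma mu01_prod3 : mu01.prod (mu01.prod mu01) =
    volume.restrict (Set.Ioc (0:ℝ) 1 ×ˢ (Set.Ioc (0:ℝ) 1 ×ˢ Set.Ioc (0:ℝ) 1)) := by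
  rw [mu01_prod, Measure.prod_restrict, ← Measure.volume_eq_prod]

lemma integrable_mu01 {f : ℝ → ℝ} (hf : ContinuousOn f (Set.Icc 0 1)) :
    Integrable f mu01 :=
  ((hf.integrableOn_compact isCompact_Icc).mono_set Set.Ioc_subset_Icc_self)

lemma integrable_mu01_prod {f : ℝ × ℝ → ℝ}
    (hf : ContinuousOn f (Set.Icc 0 1 ×ˢ Set.Icc 0 1)) :
    Integrable f (mu01.prod mu01) := by
  rw [mu01_prod]
  exact (hf.integrableOn_compact (isCompact_Icc.prod isCompact_Icc)).mono_set
    (Set.prod_mono Set.Ioc_subset_Icc_self Set.Ioc_subset_Icc_self)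

lemma integrable_mu01_prod3 {f : ℝ × ℝ × ℝ → ℝ}
    (hf : ContinuousOn f (Set.Icc 0 1 ×ˢ (Set.Icc 0 1 ×ˢ Set.Icc 0 1))) :
    Integrable f (mu01.prod (mu01.prod mu01)) := by
  rw [mu01_prod3]
  exact (hf.integrableOn_compact (isCompact_Icc.prod (isCompact_Icc.prod isCompact_Icc))).mono_set
    (Set.prod_mono Set.Ioc_subset_Icc_self
      (Set.prod_mono Set.Ioc_subset_Icc_self Set.Ioc_subset_Icc_self))

section main

variable {X : ℝ × ℝ × ℝ → R3} (hX : ContDiff ℝ (⊤ : ℕ∞) X)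
  (hper1 : ∀ z : ℝ × ℝ × ℝ, X (z + (1, 0, 0)) = X z)
  (hper2 : ∀ z : ℝ × ℝ × ℝ, X (z + (0, 1, 0)) = X z)
  (h0 : ∀ z : ℝ × ℝ × ℝ, z.2.2 ∈ Set.Icc (0:ℝ) 1 → X z ≠ 0)

include hX h0 in
/-- slice continuity helper: any composite slice of `om` resp. `Dom` -/
lemma contOn_om_slice {A : Type*} [TopologicalSpace A] {e : A → ℝ × ℝ × ℝ}
    (he : Continuous e) {S : Set A} (hS : ∀ a ∈ S, (e a).2.2 ∈ Set.Icc (0:ℝ) 1)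
    (v w : ℝ × ℝ × ℝ) : ContinuousOn (fun a => om X v w (e a)) S :=
  (continuousOn_om X hX v w).comp he.continuousOn (fun a ha => h0 _ (hS a ha))

include hX h0 in
lemma contOn_Dom_slice {A : Type*} [TopologicalSpace A] {e : A → ℝ × ℝ × ℝ}
    (he : Continuous e) {S : Set A} (hS : ∀ a ∈ S, (e a).2.2 ∈ Set.Icc (0:ℝ) 1)
    (v w c : ℝ × ℝ × ℝ) : ContinuousOn (fun a => Dom X v w c (e a)) S :=
  (continuousOn_Dom X hX v w c).comp he.continuousOn (fun a ha => h0 _ (hS a ha))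

include hX h0 in
lemma ftc_u (s t : ℝ) :
    ∫ u, Dom X E1 E2 E3 (s, t, u) ∂mu01
      = om X E1 E2 (s, t, 1) - om X E1 E2 (s, t, 0) := by
  have he : Continuous fun u : ℝ => ((s, t, u) : ℝ × ℝ × ℝ) :=
    continuous_const.prodMk (continuous_const.prodMk continuous_id)
  have hS : ∀ u ∈ Set.Icc (0:ℝ) 1, ((s, t, u) : ℝ × ℝ × ℝ).2.2 ∈ Set.Icc (0:ℝ) 1 :=
    fun u hu => hu
  rw [← intervalIntegral.integral_of_le zero_le_one]
  refine intervalIntegral.integral_eq_sub_of_hasDeriv_right_of_le zero_le_one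
    (contOn_om_slice hX h0 he hS E1 E2) (fun u hu => ?_) ?_
  · have hg : HasDerivAt (fun u' : ℝ => ((s, t, u') : ℝ × ℝ × ℝ)) E3 u :=
      (hasDerivAt_const u s).prodMk ((hasDerivAt_const u t).prodMk (hasDerivAt_id u))
    exact (hasDerivAt_om X hX hg (h0 _ (Set.mem_Icc_of_Ioo hu)) E1 E2).hasDerivWithinAt
  · exact ((contOn_Dom_slice hX h0 he hS E1 E2 E3).mono
      (by rw [Set.uIcc_of_le zero_le_one])).intervalIntegrable

include hX hper1 h0 in
lemma ftc_s (t u : ℝ) (hu : u ∈ Set.Icc (0:ℝ) 1) :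
    ∫ s, Dom X E2 E3 E1 (s, t, u) ∂mu01 = 0 := by
  rw [← intervalIntegral.integral_of_le zero_le_one]
  have : ∀ σ ∈ Set.uIcc (0:ℝ) 1, HasDerivAt (fun s => om X E2 E3 (s, t, u))
      (Dom X E2 E3 E1 (σ, t, u)) σ := by
    intro σ _
    have hg : HasDerivAt (fun σ : ℝ => ((σ, t, u) : ℝ × ℝ × ℝ)) E1 σ :=
      (hasDerivAt_id σ).prodMk ((hasDerivAt_const σ t).prodMk (hasDerivAt_const σ u))
    exact hasDerivAt_om X hX hg (h0 _ hu) E2 E3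
  rw [intervalIntegral.integral_eq_sub_of_hasDerivAt this ?_]
  · have : ((1 : ℝ), t, u) = ((0 : ℝ), t, u) + (1, 0, 0) := by simp
    rw [this, om_per X hX hper1, sub_self]
  · have he : Continuous fun s : ℝ => ((s, t, u) : ℝ × ℝ × ℝ) :=
      continuous_id.prodMk (continuous_const.prodMk continuous_const)
    exact ((contOn_Dom_slice hX h0 he (fun a _ => hu) E2 E3 E1).mono
      (Set.subset_univ _)).intervalIntegrable

include hX hper2 h0 in
lemma ftc_t (s u : ℝ) (hu : u ∈ Set.Icc (0:ℝ) 1) :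
    ∫ t, Dom X E3 E1 E2 (s, t, u) ∂mu01 = 0 := by
  rw [← intervalIntegral.integral_of_le zero_le_one]
  have : ∀ τ ∈ Set.uIcc (0:ℝ) 1, HasDerivAt (fun t => om X E3 E1 (s, t, u))
      (Dom X E3 E1 E2 (s, τ, u)) τ := by
    intro τ _
    have hg : HasDerivAt (fun τ : ℝ => ((s, τ, u) : ℝ × ℝ × ℝ)) E2 τ :=
      (hasDerivAt_const τ s).prodMk ((hasDerivAt_id τ).prodMk (hasDerivAt_const τ u))
    exact hasDerivAt_om X hX hg (h0 _ hu) E3 E1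
  rw [intervalIntegral.integral_eq_sub_of_hasDerivAt this ?_]
  · have : ((s : ℝ), (1 : ℝ), u) = ((s : ℝ), (0 : ℝ), u) + (0, 1, 0) := by simp
    rw [this, om_per X hX hper2, sub_self]
  · have he : Continuous fun t : ℝ => ((s, t, u) : ℝ × ℝ × ℝ) :=
      continuous_const.prodMk (continuous_id.prodMk continuous_const)
    exact ((contOn_Dom_slice hX h0 he (fun a _ => hu) E3 E1 E2).mono
      (Set.subset_univ _)).intervalIntegrable


include hX hper1 hper2 h0 in
lemma key :
    ∫ s, (∫ t, om X E1 E2 (s, t, 1) ∂mu01) ∂mu01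
      = ∫ s, (∫ t, om X E1 E2 (s, t, 0) ∂mu01) ∂mu01 := by
  classical
  -- continuity maps
  have hmap3 : ∀ a ∈ Set.Icc (0:ℝ) 1 ×ˢ (Set.Icc (0:ℝ) 1 ×ˢ Set.Icc (0:ℝ) 1),
      (id a : ℝ × ℝ × ℝ).2.2 ∈ Set.Icc (0:ℝ) 1 := fun a ha => ha.2.2
  have e2c : ∀ s : ℝ, Continuous fun p : ℝ × ℝ => ((s, p.1, p.2) : ℝ × ℝ × ℝ) :=
    fun s => continuous_const.prodMk (continuous_fst.prodMk continuous_snd)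
  have hmap2 : ∀ (s : ℝ), ∀ a ∈ Set.Icc (0:ℝ) 1 ×ˢ Set.Icc (0:ℝ) 1,
      (((s, a.1, a.2)) : ℝ × ℝ × ℝ).2.2 ∈ Set.Icc (0:ℝ) 1 := fun s a ha => ha.2
  have euc : ∀ s t : ℝ, Continuous fun u : ℝ => ((s, t, u) : ℝ × ℝ × ℝ) :=
    fun s t => continuous_const.prodMk (continuous_const.prodMk continuous_id)
  have hmapu : ∀ (s t : ℝ), ∀ a ∈ Set.Icc (0:ℝ) 1,
      (((s, t, a)) : ℝ × ℝ × ℝ).2.2 ∈ Set.Icc (0:ℝ) 1 := fun s t a ha => ha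
  have etc' : ∀ (s u : ℝ), Continuous fun t : ℝ => ((s, t, u) : ℝ × ℝ × ℝ) :=
    fun s u => continuous_const.prodMk (continuous_id.prodMk continuous_const)
  -- integrability facts
  have hD231_3 : Integrable (Dom X E2 E3 E1) (mu01.prod (mu01.prod mu01)) :=
    integrable_mu01_prod3 (contOn_Dom_slice hX h0 continuous_id hmap3 E2 E3 E1)
  have hD312_3 : Integrable (Dom X E3 E1 E2) (mu01.prod (mu01.prod mu01)) :=
    integrable_mu01_prod3 (contOn_Dom_slice hX h0 continuous_id hmap3 E3 E1 E2)
  have hD231_2 : ∀ s : ℝ, Integrable (fun p : ℝ × ℝ => Dom X E2 E3 E1 (s, p.1, p.2))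
      (mu01.prod mu01) := fun s =>
    integrable_mu01_prod (contOn_Dom_slice hX h0 (e2c s) (hmap2 s) E2 E3 E1)
  have hD312_2 : ∀ s : ℝ, Integrable (fun p : ℝ × ℝ => Dom X E3 E1 E2 (s, p.1, p.2))
      (mu01.prod mu01) := fun s =>
    integrable_mu01_prod (contOn_Dom_slice hX h0 (e2c s) (hmap2 s) E3 E1 E2)
  have hD231_u : ∀ s t : ℝ, Integrable (fun u => Dom X E2 E3 E1 (s, t, u)) mu01 :=
    fun s t => integrable_mu01 (contOn_Dom_slice hX h0 (euc s t) (hmapu s t) E2 E3 E1)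
  have hD312_u : ∀ s t : ℝ, Integrable (fun u => Dom X E3 E1 E2 (s, t, u)) mu01 :=
    fun s t => integrable_mu01 (contOn_Dom_slice hX h0 (euc s t) (hmapu s t) E3 E1 E2)
  have hom1_2 : Integrable (fun p : ℝ × ℝ => om X E1 E2 (p.1, p.2, 1)) (mu01.prod mu01) :=
    integrable_mu01_prod (contOn_om_slice hX h0
      (continuous_fst.prodMk (continuous_snd.prodMk continuous_const))
      (fun a _ => Set.mem_Icc.2 ⟨zero_le_one, le_refl 1⟩) E1 E2)
  have hom0_2 : Integrable (fun p : ℝ × ℝ => om X E1 E2 (p.1, p.2, 0)) (mu01.prod mu01) :=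
    integrable_mu01_prod (contOn_om_slice hX h0
      (continuous_fst.prodMk (continuous_snd.prodMk continuous_const))
      (fun a _ => Set.mem_Icc.2 ⟨le_refl 0, zero_le_one⟩) E1 E2)
  have hom1_t : ∀ s : ℝ, Integrable (fun t => om X E1 E2 (s, t, 1)) mu01 := fun s =>
    integrable_mu01 (contOn_om_slice hX h0 (etc' s 1)
      (fun a _ => Set.mem_Icc.2 ⟨zero_le_one, le_refl 1⟩) E1 E2)
  have hom0_t : ∀ s : ℝ, Integrable (fun t => om X E1 E2 (s, t, 0)) mu01 := fun s =>
    integrable_mu01 (contOn_om_slice hX h0 (etc' s 0)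
      (fun a _ => Set.mem_Icc.2 ⟨le_refl 0, zero_le_one⟩) E1 E2)
  -- T1 = 0
  have T1 : ∫ s, (∫ t, (∫ u, Dom X E2 E3 E1 (s, t, u) ∂mu01) ∂mu01) ∂mu01 = 0 := by
    have hs1 : ∀ s : ℝ, (∫ t, (∫ u, Dom X E2 E3 E1 (s, t, u) ∂mu01) ∂mu01)
        = ∫ p, Dom X E2 E3 E1 (s, p.1, p.2) ∂(mu01.prod mu01) :=
      fun s => (MeasureTheory.integral_prod _ (hD231_2 s)).symm
    calc ∫ s, (∫ t, (∫ u, Dom X E2 E3 E1 (s, t, u) ∂mu01) ∂mu01) ∂mu01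
        = ∫ s, (∫ p, Dom X E2 E3 E1 (s, p.1, p.2) ∂(mu01.prod mu01)) ∂mu01 := by
          exact MeasureTheory.integral_congr_ae (Filter.Eventually.of_forall
            (fun s => hs1 s))
      _ = ∫ p, (∫ s, Dom X E2 E3 E1 (s, p.1, p.2) ∂mu01) ∂(mu01.prod mu01) := by
          apply MeasureTheory.integral_integral_swap
          exact hD231_3
      _ = 0 := by
          have : ∀ᵐ p ∂(mu01.prod mu01),
              (∫ s, Dom X E2 E3 E1 (s, p.1, p.2) ∂mu01) = 0 := by
            rw [mu01_prod]
            filter_upwards [MeasureTheory.ae_restrict_mem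
              (measurableSet_Ioc.prod measurableSet_Ioc)] with p hp
            exact ftc_s hX hper1 h0 p.1 p.2 (Set.Ioc_subset_Icc_self hp.2)
          rw [MeasureTheory.integral_congr_ae this, MeasureTheory.integral_zero]
  -- T2 = 0
  have T2 : ∫ s, (∫ t, (∫ u, Dom X E3 E1 E2 (s, t, u) ∂mu01) ∂mu01) ∂mu01 = 0 := by
    have hs2 : ∀ s : ℝ, (∫ t, (∫ u, Dom X E3 E1 E2 (s, t, u) ∂mu01) ∂mu01) = 0 := by
      intro s
      rw [MeasureTheory.integral_integral_swap (hD312_2 s)]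
      have : ∀ᵐ u ∂mu01, (∫ t, Dom X E3 E1 E2 (s, t, u) ∂mu01) = 0 := by
        filter_upwards [MeasureTheory.ae_restrict_mem measurableSet_Ioc] with u hu
        exact ftc_t hX hper2 h0 s u (Set.Ioc_subset_Icc_self hu)
      rw [MeasureTheory.integral_congr_ae this, MeasureTheory.integral_zero]
    rw [MeasureTheory.integral_congr_ae (Filter.Eventually.of_forall hs2),
      MeasureTheory.integral_zero]
  -- inner identity
  have hinner : ∀ s t : ℝ, (∫ u, Dom X E1 E2 E3 (s, t, u) ∂mu01)
      = -((∫ u, Dom X E2 E3 E1 (s, t, u) ∂mu01) + ∫ u, Dom X E3 E1 E2 (s, t, u) ∂mu01) := by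
    intro s t
    have hpt : ∀ᵐ u ∂mu01, Dom X E1 E2 E3 (s, t, u)
        = (fun u => -(Dom X E2 E3 E1 (s, t, u) + Dom X E3 E1 E2 (s, t, u))) u := by
      filter_upwards [MeasureTheory.ae_restrict_mem measurableSet_Ioc] with u hu
      have h := Dom_cyclic X hX (h0 (s, t, u) (Set.Ioc_subset_Icc_self hu)) E1 E2 E3
      linarith
    rw [MeasureTheory.integral_congr_ae hpt, MeasureTheory.integral_neg,
      MeasureTheory.integral_add (hD231_u s t) (hD312_u s t)]
  -- main chain
  have marg1 : Integrable (fun s => ∫ t, om X E1 E2 (s, t, 1) ∂mu01) mu01 := by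
    have := hom1_2.integral_prod_left
    exact this
  have marg0 : Integrable (fun s => ∫ t, om X E1 E2 (s, t, 0) ∂mu01) mu01 := by
    have := hom0_2.integral_prod_left
    exact this
  have margD231_t : ∀ s : ℝ, Integrable (fun t => ∫ u, Dom X E2 E3 E1 (s, t, u) ∂mu01)
      mu01 := fun s => (hD231_2 s).integral_prod_left
  have margD312_t : ∀ s : ℝ, Integrable (fun t => ∫ u, Dom X E3 E1 E2 (s, t, u) ∂mu01)
      mu01 := fun s => (hD312_2 s).integral_prod_left
  have margD231_s : Integrable
      (fun s => ∫ t, (∫ u, Dom X E2 E3 E1 (s, t, u) ∂mu01) ∂mu01) mu01 := by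
    apply (hD231_3.integral_prod_left).congr
    exact Filter.Eventually.of_forall fun s => MeasureTheory.integral_prod _ (hD231_2 s)
  have margD312_s : Integrable
      (fun s => ∫ t, (∫ u, Dom X E3 E1 E2 (s, t, u) ∂mu01) ∂mu01) mu01 := by
    apply (hD312_3.integral_prod_left).congr
    exact Filter.Eventually.of_forall fun s => MeasureTheory.integral_prod _ (hD312_2 s)
  have main : (∫ s, (∫ t, om X E1 E2 (s, t, 1) ∂mu01) ∂mu01)
      - (∫ s, (∫ t, om X E1 E2 (s, t, 0) ∂mu01) ∂mu01) = 0 := by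
    rw [← MeasureTheory.integral_sub marg1 marg0]
    have step1 : ∀ s : ℝ, (∫ t, om X E1 E2 (s, t, 1) ∂mu01)
        - (∫ t, om X E1 E2 (s, t, 0) ∂mu01)
        = -((∫ t, (∫ u, Dom X E2 E3 E1 (s, t, u) ∂mu01) ∂mu01)
          + (∫ t, (∫ u, Dom X E3 E1 E2 (s, t, u) ∂mu01) ∂mu01)) := by
      intro s
      rw [← MeasureTheory.integral_sub (hom1_t s) (hom0_t s)]
      have e1 : ∀ t : ℝ, om X E1 E2 (s, t, 1) - om X E1 E2 (s, t, 0)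
          = (fun t => -((∫ u, Dom X E2 E3 E1 (s, t, u) ∂mu01)
              + ∫ u, Dom X E3 E1 E2 (s, t, u) ∂mu01)) t := by
        intro t
        rw [← ftc_u hX h0 s t, hinner s t]
      rw [MeasureTheory.integral_congr_ae (Filter.Eventually.of_forall e1),
        MeasureTheory.integral_neg,
        MeasureTheory.integral_add (margD231_t s) (margD312_t s)]
    rw [MeasureTheory.integral_congr_ae (Filter.Eventually.of_forall step1),
      MeasureTheory.integral_neg,
      MeasureTheory.integral_add margD231_s margD312_s, T1, T2]
    ring
  linarith [main]


include hX in
lemma hasDerivAt_X_slice1 (s t u : ℝ) :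
    HasDerivAt (fun σ => X (σ, t, u)) (P X E1 (s, t, u)) s := by
  have hg : HasDerivAt (fun σ : ℝ => ((σ, t, u) : ℝ × ℝ × ℝ)) E1 s :=
    (hasDerivAt_id s).prodMk ((hasDerivAt_const s t).prodMk (hasDerivAt_const s u))
  exact ((hX.differentiable (by simp) _).hasFDerivAt.comp_hasDerivAt s hg)

include hX in
lemma hasDerivAt_X_slice2 (s t u : ℝ) :
    HasDerivAt (fun τ => X (s, τ, u)) (P X E2 (s, t, u)) t := by
  have hg : HasDerivAt (fun τ : ℝ => ((s, τ, u) : ℝ × ℝ × ℝ)) E2 t :=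
    (hasDerivAt_const t s).prodMk ((hasDerivAt_id t).prodMk (hasDerivAt_const t u))
  exact ((hX.differentiable (by simp) _).hasFDerivAt.comp_hasDerivAt t hg)

end main

lemma d3_neg_left (u v w : R3) : d3 (-u) v w = -(d3 u v w) := by
  simp only [d3_expand, Pi.neg_apply]; ring

end GLK
end


open GLK

theorem gaussLnk_isotopy_invariant (α β : ℝ → R3) (H : R3 → ℝ → R3)
    (hα : IsSmoothLoop α) (hβ : IsSmoothLoop β)
    (hdisj : ∀ s t : ℝ, α s ≠ β t)
    (hHsmooth : ContDiff ℝ (⊤ : ℕ∞) (fun p : R3 × ℝ => H p.1 p.2))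
    (hH0 : ∀ x : R3, H x 0 = x)
    (hHdiffeo : ∀ t ∈ Set.Icc (0:ℝ) 1, ∃ g : R3 → R3, ContDiff ℝ (⊤ : ℕ∞) g ∧
      Function.LeftInverse g (fun x => H x t) ∧
      Function.RightInverse g (fun x => H x t)) :
    gaussLnk (fun s => H (α s) 1) (fun t => H (β t) 1) = gaussLnk α β := by
  classical
  set X : ℝ × ℝ × ℝ → R3 := fun z => H (β z.2.1) z.2.2 - H (α z.1) z.2.2 with hXdef
  have hXs : ContDiff ℝ (⊤ : ℕ∞) X := by
    rw [hXdef]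
    exact (hHsmooth.comp ((hβ.1.comp (contDiff_fst.comp contDiff_snd)).prodMk
      (contDiff_snd.comp contDiff_snd))).sub
      (hHsmooth.comp ((hα.1.comp contDiff_fst).prodMk (contDiff_snd.comp contDiff_snd)))
  have hper1 : ∀ z : ℝ × ℝ × ℝ, X (z + (1, 0, 0)) = X z := by
    intro z
    have h1 : (z + ((1:ℝ), (0:ℝ), (0:ℝ))) = (z.1 + 1, z.2.1, z.2.2) := by
      simp [Prod.ext_iff]
    rw [hXdef]
    simp only [h1]
    rw [hα.2 z.1]
  have hper2 : ∀ z : ℝ × ℝ × ℝ, X (z + (0, 1, 0)) = X z := by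
    intro z
    have h1 : (z + ((0:ℝ), (1:ℝ), (0:ℝ))) = (z.1, z.2.1 + 1, z.2.2) := by
      simp [Prod.ext_iff]
    rw [hXdef]
    simp only [h1]
    rw [hβ.2 z.2.1]
  have h0 : ∀ z : ℝ × ℝ × ℝ, z.2.2 ∈ Set.Icc (0:ℝ) 1 → X z ≠ 0 := by
    intro z hz hEq
    obtain ⟨g, _, hgl, _⟩ := hHdiffeo z.2.2 hz
    rw [hXdef] at hEq
    have hEq' : H (β z.2.1) z.2.2 = H (α z.1) z.2.2 := sub_eq_zero.1 hEq
    have h2 := congrArg g hEq'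
    have hb := hgl (β z.2.1)
    have ha := hgl (α z.1)
    simp only at hb ha
    rw [hb, ha] at h2
    exact hdisj z.1 z.2.1 h2.symm
  -- derivative identifications
  have hA1 : ∀ s t : ℝ, deriv (fun σ => H (α σ) 1) s = -(P X E1 (s, t, 1)) := by
    intro s t
    have h := (hasDerivAt_X_slice1 hXs s t 1).const_sub (H (β t) 1)
    have heq : (fun σ => H (β t) 1 - X (σ, t, 1)) = fun σ => H (α σ) 1 := by
      funext σ
      rw [hXdef]
      simp [sub_sub_cancel]
    rw [heq] at h
    exact h.deriv
  have hB1 : ∀ s t : ℝ, deriv (fun τ => H (β τ) 1) t = P X E2 (s, t, 1) := by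
    intro s t
    have h := (hasDerivAt_X_slice2 hXs s t 1).add_const (H (α s) 1)
    have heq : (fun τ => X (s, τ, 1) + H (α s) 1) = fun τ => H (β τ) 1 := by
      funext τ
      rw [hXdef]
      simp [sub_add_cancel]
    rw [heq] at h
    exact h.deriv
  have hA0 : ∀ s t : ℝ, deriv α s = -(P X E1 (s, t, 0)) := by
    intro s t
    have h := (hasDerivAt_X_slice1 hXs s t 0).const_sub (H (β t) 0)
    have heq : (fun σ => H (β t) 0 - X (σ, t, 0)) = α := by
      funext σ
      rw [hXdef]
      simp [hH0, sub_sub_cancel]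
    rw [heq] at h
    exact h.deriv
  have hB0 : ∀ s t : ℝ, deriv β t = P X E2 (s, t, 0) := by
    intro s t
    have h := (hasDerivAt_X_slice2 hXs s t 0).add_const (H (α s) 0)
    have heq : (fun τ => X (s, τ, 0) + H (α s) 0) = β := by
      funext τ
      rw [hXdef]
      simp [hH0, sub_add_cancel]
    rw [heq] at h
    exact h.deriv
  -- integrand identifications
  have hd : ∀ (a b w : R3), dotProduct (crossProduct a b) w / enorm3 w ^ 3
      = d3 a b w / nrm w ^ 3 := fun _ _ _ => rfl
  have hw1 : ∀ s t : ℝ, H (β t) 1 - H (α s) 1 = X (s, t, 1) := fun s t => by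
    rw [hXdef]
  have hw0 : ∀ s t : ℝ, β t - α s = X (s, t, 0) := fun s t => by
    rw [hXdef]; simp [hH0]
  have hint1 : ∀ s t : ℝ,
      dotProduct (crossProduct (deriv (fun σ => H (α σ) 1) s)
        (deriv (fun τ => H (β τ) 1) t)) (H (β t) 1 - H (α s) 1) /
        enorm3 (H (β t) 1 - H (α s) 1) ^ 3 = -(om X E1 E2 (s, t, 1)) := by
    intro s t
    rw [hd, hA1 s t, hB1 s t, hw1 s t, d3_neg_left, neg_div]
    rfl
  have hint0 : ∀ s t : ℝ,
      dotProduct (crossProduct (deriv α s) (deriv β t)) (β t - α s) /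
        enorm3 (β t - α s) ^ 3 = -(om X E1 E2 (s, t, 0)) := by
    intro s t
    rw [hd, hA0 s t, hB0 s t, hw0 s t, d3_neg_left, neg_div]
    rfl
  -- convert both sides
  have conv : ∀ u₀ : ℝ,
      (∫ s in (0:ℝ)..1, ∫ t in (0:ℝ)..1, -(om X E1 E2 (s, t, u₀)))
        = -(∫ s, (∫ t, om X E1 E2 (s, t, u₀) ∂mu01) ∂mu01) := by
    intro u₀
    rw [intervalIntegral.integral_of_le zero_le_one]
    have hin : ∀ s : ℝ, (∫ t in (0:ℝ)..1, -(om X E1 E2 (s, t, u₀)))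
        = -(∫ t, om X E1 E2 (s, t, u₀) ∂mu01) := by
      intro s
      rw [intervalIntegral.integral_of_le zero_le_one]
      exact MeasureTheory.integral_neg _
    rw [MeasureTheory.integral_congr_ae (Filter.Eventually.of_forall hin)]
    exact MeasureTheory.integral_neg _
  have eq1 : gaussLnk (fun s => H (α s) 1) (fun t => H (β t) 1)
      = (1 / (4 * π)) * -(∫ s, (∫ t, om X E1 E2 (s, t, 1) ∂mu01) ∂mu01) := by
    rw [gaussLnk, ← conv 1]
    congr 1
    apply intervalIntegral.integral_congr
    intro s _
    apply intervalIntegral.integral_congr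
    intro t _
    exact hint1 s t
  have eq0 : gaussLnk α β
      = (1 / (4 * π)) * -(∫ s, (∫ t, om X E1 E2 (s, t, 0) ∂mu01) ∂mu01) := by
    rw [gaussLnk, ← conv 0]
    congr 1
    apply intervalIntegral.integral_congr
    intro s _
    apply intervalIntegral.integral_congr
    intro t _
    exact hint0 s t
  rw [eq1, eq0, GLK.key hXs hper1 hper2 h0]
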